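/- Let K satisfy the size condition and the regularity condition and let M be the associated Marcinkiewicz integral. Then there exists a constant C > 0 such that for every ball S and every b ∈ L¹(μ) with supp(b) ⊂ S and ∫_X b dμ = 0, ∫_{X\2S} M(b)(x) dμ(x) ≤ C‖b‖_{L¹(μ)}. -/

import Mathlib

open MeasureTheory Metric Set
open scoped ENNReal NNReal

namespace NonHomog

variable {X : Type*} [MetricSpace X] [MeasurableSpace X] [BorelSpace X]

/-- `(X, d, μ)` is upper doubling with dominating function `lam` and constant `Clam`,
also satisfying `lam x r ≤ Clam * lam y r` whenever `dist x y ≤ r`. -/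
structure IsUpperDoubling (μ : Measure X) (lam : X → ℝ → ℝ) (Clam : ℝ) : Prop where
  one_lt : 1 < Clam
  lam_pos : ∀ x r, 0 < r → 0 < lam x r
  lam_mono : ∀ x r s, 0 < r → r ≤ s → lam x r ≤ lam x s
  measure_ball_le : ∀ x r, 0 < r → μ (ball x r) ≤ ENNReal.ofReal (lam x r)
  lam_le : ∀ x r, 0 < r → lam x r ≤ Clam * lam x (r / 2)
  lam_comp : ∀ x y r, 0 < r → dist x y ≤ r → lam x r ≤ Clam * lam y r

/-- `(X, d)` is geometrically doubling with constant `N0`. -/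
def GeometricallyDoubling (X : Type*) [MetricSpace X] (N0 : ℕ) : Prop :=
  ∀ (x : X) (r : ℝ), 0 < r → ∃ s : Finset X, s.card ≤ N0 ∧
    ball x r ⊆ ⋃ y ∈ s, ball y (r / 2)

/-- The size condition for the kernel `K`. -/
def KernelSize (lam : X → ℝ → ℝ) (K : X → X → ℝ) (CK : ℝ) : Prop :=
  ∀ x y : X, x ≠ y → |K x y| ≤ CK * dist x y / lam x (dist x y)

/-- The regularity (Hörmander-type) condition for the kernel `K`. -/
def KernelReg (μ : Measure X) (K : X → X → ℝ) (CK : ℝ) : Prop :=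
  ∀ y y' : X,
    ∫⁻ x in {x : X | 2 * dist y y' ≤ dist x y},
      ENNReal.ofReal ((|K x y - K x y'| + |K y x - K y' x|) / dist x y) ∂μ
      ≤ ENNReal.ofReal CK

/-- The Marcinkiewicz integral associated with the kernel `K`. -/
noncomputable def marcinkiewicz (μ : Measure X) (K : X → X → ℝ) (f : X → ℝ) (x : X) : ℝ≥0∞ :=
  (∫⁻ t in Ioi (0 : ℝ),
      (ENNReal.ofReal |∫ y in {y : X | dist x y < t}, K x y * f y ∂μ|) ^ 2
        / ENNReal.ofReal (t ^ 3)) ^ (1 / 2 : ℝ)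

/-- The coefficient `δ(B, S)` for balls `B = B(cB, rB) ⊆ S = B(cS, rS)`. -/
noncomputable def delta (μ : Measure X) (lam : X → ℝ → ℝ)
    (cB : X) (rB : ℝ) (cS : X) (rS : ℝ) : ℝ :=
  ∫ x in ball cS (2 * rS) \ ball cB rB, 1 / lam cB (dist x cB) ∂μ

/-- The exponent `1/p - 1` (interpreted as `-1` when `p = ∞`). -/
noncomputable def atomExp (p : ℝ≥0∞) : ℝ := 1 / p.toReal - 1

/-- `b` is a `(p,1)_λ`-atomic block with `|b|_{H^{1,p}_atb} = ν`. -/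
def IsAtomicBlock (μ : Measure X) (lam : X → ℝ → ℝ) (ρ : ℝ) (p : ℝ≥0∞)
    (b : X → ℝ) (ν : ℝ) : Prop :=
  ∃ (cB : X) (rB : ℝ), 0 < rB ∧ Function.support b ⊆ ball cB rB ∧
    Integrable b μ ∧ (∫ x, b x ∂μ) = 0 ∧
    ∃ (κ₁ κ₂ : ℝ) (a₁ a₂ : X → ℝ) (c₁ c₂ : X) (r₁ r₂ : ℝ),
      0 < r₁ ∧ 0 < r₂ ∧
      ball c₁ r₁ ⊆ ball cB rB ∧ ball c₂ r₂ ⊆ ball cB rB ∧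
      Function.support a₁ ⊆ ball c₁ r₁ ∧ Function.support a₂ ⊆ ball c₂ r₂ ∧
      (∀ x, b x = κ₁ * a₁ x + κ₂ * a₂ x) ∧
      eLpNorm a₁ p μ ≤ μ (ball c₁ (ρ * r₁)) ^ atomExp p *
        ENNReal.ofReal ((1 + delta μ lam c₁ r₁ cB rB)⁻¹) ∧
      eLpNorm a₂ p μ ≤ μ (ball c₂ (ρ * r₂)) ^ atomExp p *
        ENNReal.ofReal ((1 + delta μ lam c₂ r₂ cB rB)⁻¹) ∧
      ν = |κ₁| + |κ₂|

/-- A building block of `H¹(μ)` : either a `(p,1)_λ`-atomic block, or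
(when `μ(X) < ∞`) the constant function `μ(X)⁻¹`, regarded as an atomic
block of norm `1`. -/
def IsH1Block (μ : Measure X) (lam : X → ℝ → ℝ) (ρ : ℝ) (p : ℝ≥0∞)
    (b : X → ℝ) (ν : ℝ) : Prop :=
  IsAtomicBlock μ lam ρ p b ν ∨
    (μ Set.univ ≠ ∞ ∧ (∀ x, b x = ((μ Set.univ).toReal)⁻¹) ∧ ν = 1)

/-- Membership in the atomic Hardy space `H¹(μ)` (with `ρ = 2`, `p = ∞`;
the space is independent of these choices). -/
def MemH1 (μ : Measure X) (lam : X → ℝ → ℝ) (f : X → ℝ) : Prop :=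
  Integrable f μ ∧ ∃ (b : ℕ → X → ℝ) (ν : ℕ → ℝ),
    (∀ j, IsH1Block μ lam 2 ⊤ (b j) (ν j)) ∧ Summable ν ∧
    ∀ᵐ x ∂μ, HasSum (fun j => b j x) (f x)

/-- The norm of `f` in the atomic Hardy space `H¹(μ)`. -/
noncomputable def H1norm (μ : Measure X) (lam : X → ℝ → ℝ) (f : X → ℝ) : ℝ :=
  sInf { s : ℝ | ∃ (b : ℕ → X → ℝ) (ν : ℕ → ℝ),
    (∀ j, IsH1Block μ lam 2 ⊤ (b j) (ν j)) ∧ Summable ν ∧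
    (∀ᵐ x ∂μ, HasSum (fun j => b j x) (f x)) ∧ s = ∑' j, ν j }

/-- `f` is a finite linear combination of `(p,1)_λ`-atomic blocks. -/
def MemH1fin (μ : Measure X) (lam : X → ℝ → ℝ) (ρ : ℝ) (p : ℝ≥0∞) (f : X → ℝ) : Prop :=
  ∃ (N : ℕ) (b : Fin N → X → ℝ) (ν : Fin N → ℝ),
    (∀ j, IsAtomicBlock μ lam ρ p (b j) (ν j)) ∧ ∀ x, f x = ∑ j, b j x

/-- The norm in the finite atomic Hardy space `H^{1,p}_fin(μ)`. -/
noncomputable def H1finNorm (μ : Measure X) (lam : X → ℝ → ℝ) (ρ : ℝ) (p : ℝ≥0∞)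
    (f : X → ℝ) : ℝ :=
  sInf { s : ℝ | ∃ (N : ℕ) (b : Fin N → X → ℝ) (ν : Fin N → ℝ),
    (∀ j, IsAtomicBlock μ lam ρ p (b j) (ν j)) ∧ (∀ x, f x = ∑ j, b j x) ∧
    s = ∑ j, ν j }

/-- `C` is an admissible `RBMO(μ)` constant for `f` (with `ρ = 2`). -/
def RBMOBound (μ : Measure X) (lam : X → ℝ → ℝ) (f : X → ℝ) (C : ℝ) : Prop :=
  ∃ fB : X → ℝ → ℝ,
    (∀ (c : X) (r : ℝ), 0 < r →
      ∫ x in ball c r, |f x - fB c r| ∂μ ≤ C * (μ (ball c (2 * r))).toReal) ∧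
    (∀ (cB : X) (rB : ℝ) (cS : X) (rS : ℝ), 0 < rB → 0 < rS →
      ball cB rB ⊆ ball cS rS →
      |fB cB rB - fB cS rS| ≤ C * (1 + delta μ lam cB rB cS rS))

/-- Membership in `RBMO(μ)`. -/
def MemRBMO (μ : Measure X) (lam : X → ℝ → ℝ) (f : X → ℝ) : Prop :=
  LocallyIntegrable f μ ∧ ∃ C : ℝ, 0 ≤ C ∧ RBMOBound μ lam f C

/-- The `RBMO(μ)` norm. -/
noncomputable def RBMONorm (μ : Measure X) (lam : X → ℝ → ℝ) (f : X → ℝ) : ℝ :=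
  sInf { C : ℝ | 0 ≤ C ∧ RBMOBound μ lam f C }

/-- The ball `B(c, r)` is `(α, β)`-doubling. -/
def IsDoublingBall (μ : Measure X) (α β : ℝ) (c : X) (r : ℝ) : Prop :=
  μ (ball c (α * r)) ≤ ENNReal.ofReal β * μ (ball c r)

/-- `β_α = α^{3 max(n,ν)} + 30^n + 30^ν` with `n = log₂ N₀`, `ν = log₂ C_λ`. -/
noncomputable def betaCoef (Clam : ℝ) (N0 : ℕ) (α : ℝ) : ℝ :=
  α ^ (3 * max (Real.logb 2 (N0 : ℝ)) (Real.logb 2 Clam)) +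
    (30 : ℝ) ^ (Real.logb 2 (N0 : ℝ)) + (30 : ℝ) ^ (Real.logb 2 Clam)

/-- `α^j B(c,r)` is the smallest `(α, β)`-doubling ball of the form `α^i B(c,r)`, `i ∈ ℕ`. -/
def IsSmallestDoubling (μ : Measure X) (α β : ℝ) (c : X) (r : ℝ) (j : ℕ) : Prop :=
  1 ≤ j ∧ IsDoublingBall μ α β c (α ^ j * r) ∧
    ∀ i : ℕ, 1 ≤ i → i < j → ¬ IsDoublingBall μ α β c (α ^ i * r)

/-- The mean `m_B(f)` of `f` over the ball `B(c,r)`. -/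
noncomputable def ballAvg (μ : Measure X) (f : X → ℝ) (c : X) (r : ℝ) : ℝ :=
  (∫ x in ball c r, f x ∂μ) / (μ (ball c r)).toReal

/-- `C` is an admissible `RBLO(μ)` constant for `f`, with parameters `η, ρ`. -/
def RBLOBound (μ : Measure X) (lam : X → ℝ → ℝ) (Clam : ℝ) (N0 : ℕ) (η ρ : ℝ)
    (f : X → ℝ) (C : ℝ) : Prop :=
  (∀ (c : X) (r : ℝ) (j : ℕ), 0 < r →
      IsSmallestDoubling μ ρ (betaCoef Clam N0 ρ) c r j →
      ∫ x in ball c r, (f x - essInf f (μ.restrict (ball c (ρ ^ j * r)))) ∂μ ≤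
        C * (μ (ball c (η * r))).toReal) ∧
  (∀ (cB : X) (rB : ℝ) (cS : X) (rS : ℝ), 0 < rB → 0 < rS →
      ball cB rB ⊆ ball cS rS →
      IsDoublingBall μ ρ (betaCoef Clam N0 ρ) cB rB →
      IsDoublingBall μ ρ (betaCoef Clam N0 ρ) cS rS →
      essInf f (μ.restrict (ball cB rB)) - essInf f (μ.restrict (ball cS rS)) ≤
        C * (1 + delta μ lam cB rB cS rS))

/-- Membership in `RBLO(μ)` (with `η = ρ = 2`; the space is independent of these choices). -/
def MemRBLO (μ : Measure X) (lam : X → ℝ → ℝ) (Clam : ℝ) (N0 : ℕ) (f : X → ℝ) : Prop :=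
  LocallyIntegrable f μ ∧ ∃ C : ℝ, 0 ≤ C ∧ RBLOBound μ lam Clam N0 2 2 f C

/-- The `RBLO(μ)` norm. -/
noncomputable def RBLONorm (μ : Measure X) (lam : X → ℝ → ℝ) (Clam : ℝ) (N0 : ℕ)
    (f : X → ℝ) : ℝ :=
  sInf { C : ℝ | 0 ≤ C ∧ RBLOBound μ lam Clam N0 2 2 f C }

/-- The non-centered doubling Hardy–Littlewood maximal function `N(f)`,
taken over `(6, β)`-doubling balls. -/
noncomputable def maxN (μ : Measure X) (β : ℝ) (f : X → ℝ) (x : X) : ℝ≥0∞ :=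
  ⨆ (c : X) (r : ℝ) (_ : 0 < r) (_ : x ∈ ball c r) (_ : IsDoublingBall μ 6 β c r),
    (∫⁻ y in ball c r, ENNReal.ofReal |f y| ∂μ) / μ (ball c r)

/-- The sharp maximal function `M♯(f)`. -/
noncomputable def sharpM (μ : Measure X) (lam : X → ℝ → ℝ) (Clam : ℝ) (N0 : ℕ)
    (f : X → ℝ) (x : X) : ℝ≥0∞ :=
  (⨆ (c : X) (r : ℝ) (j : ℕ) (_ : 0 < r) (_ : x ∈ ball c r)
      (_ : IsSmallestDoubling μ 6 (betaCoef Clam N0 6) c r j),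
    (∫⁻ y in ball c r, ENNReal.ofReal |f y - ballAvg μ f c (6 ^ j * r)| ∂μ) /
      μ (ball c (5 * r))) +
  ⨆ (cB : X) (rB : ℝ) (cS : X) (rS : ℝ) (_ : 0 < rB) (_ : 0 < rS)
      (_ : x ∈ ball cB rB) (_ : ball cB rB ⊆ ball cS rS)
      (_ : IsDoublingBall μ 6 (betaCoef Clam N0 6) cB rB)
      (_ : IsDoublingBall μ 6 (betaCoef Clam N0 6) cS rS),
    ENNReal.ofReal (|ballAvg μ f cB rB - ballAvg μ f cS rS| /
      (1 + delta μ lam cB rB cS rS))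

/-- The `L^p(μ)`-"norm" of an `ℝ≥0∞`-valued function. -/
noncomputable def lpNormE (μ : Measure X) (p : ℝ) (g : X → ℝ≥0∞) : ℝ≥0∞ :=
  (∫⁻ x, g x ^ p ∂μ) ^ (1 / p)

end NonHomog

namespace NonHomog

/-- `C1` is an admissible constant in the `RBLO(μ)` characterization of Lemma 2.3,
relative to `(ρ, β_ρ)`-doubling balls. -/
def RBLOChar {X : Type*} [MetricSpace X] [MeasurableSpace X]
    (μ : Measure X) (lam : X → ℝ → ℝ) (Clam : ℝ) (N0 : ℕ) (ρ : ℝ)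
    (f : X → ℝ) (C1 : ℝ) : Prop :=
  (∀ (c : X) (r : ℝ), 0 < r → IsDoublingBall μ ρ (betaCoef Clam N0 ρ) c r →
    ∫ x in ball c r, (f x - essInf f (μ.restrict (ball c r))) ∂μ ≤
      C1 * (μ (ball c r)).toReal) ∧
  (∀ (cB : X) (rB : ℝ) (cS : X) (rS : ℝ), 0 < rB → 0 < rS →
    ball cB rB ⊆ ball cS rS →
    IsDoublingBall μ ρ (betaCoef Clam N0 ρ) cB rB →
    IsDoublingBall μ ρ (betaCoef Clam N0 ρ) cS rS →
    ballAvg μ f cB rB - ballAvg μ f cS rS ≤ C1 * (1 + delta μ lam cB rB cS rS))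

end NonHomog
namespace NonHomog

/-! For `x` outside `2S` put `d = d(x, c_S)`. The truncated integral
`∫_{d(x,y) < t} K(x,y) b(y) dμ(y)` vanishes for `t ≤ d - r_S`, is at most `∫ |K(x,·) b|`
for `d - r_S < t ≤ d + r_S`, and for `t > d + r_S` equals `∫ (K(x,y) - K(x,c_S)) b(y) dμ(y)`
because `b` has mean zero. Integrating against `dt / t³` and using the size condition gives
`M(b)(x) ≲ √(r_S / d) ‖b‖₁ / λ(x, d) + d⁻¹ ∫ |K(x,y) - K(x,c_S)| |b(y)| dμ(y)`.
The first term is integrable over `X ∖ 2S`: on the annulus `4^k r_S ≤ d < 4^(k+1) r_S` it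
is at most `C_λ³ 2^(-k) / λ(c_S, 4^(k+1) r_S)` by upper doubling, and `λ(c_S, 4^(k+1) r_S)`
dominates the measure of the annulus. The second term is handled by Tonelli and the
regularity condition. -/

theorem lintegral_Ioi_inv_pow_three {c : ℝ} (hc : 0 < c) :
    ∫⁻ t in Ioi c, (ENNReal.ofReal (t ^ 3))⁻¹ = ENNReal.ofReal (2 * c ^ 2)⁻¹ := by
  have hpos : ∀ t ∈ Ioi c, 0 < t := fun t ht => hc.trans ht
  have hrpow : EqOn (fun t : ℝ => t ^ (-3 : ℝ)) (fun t => (t ^ 3)⁻¹) (Ioi c) :=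
    fun t ht => by simp [Real.rpow_neg (hpos t ht).le]
  have hint : IntegrableOn (fun t : ℝ => (t ^ 3)⁻¹) (Ioi c) :=
    (integrableOn_Ioi_rpow_of_lt (by norm_num) hc).congr_fun hrpow measurableSet_Ioi
  rw [setLIntegral_congr_fun measurableSet_Ioi
      fun t ht => (ENNReal.ofReal_inv_of_pos (pow_pos (hpos t ht) 3)).symm,
    ← ofReal_integral_eq_lintegral_ofReal hint
      ((ae_restrict_mem measurableSet_Ioi).mono fun t ht => by have := hpos t ht; positivity),
    ← setIntegral_congr_fun measurableSet_Ioi hrpow, integral_Ioi_rpow_of_lt (by norm_num) hc]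
  congr 1
  rw [show (-3 : ℝ) + 1 = -(2 : ℕ) by norm_num, Real.rpow_neg hc.le, Real.rpow_natCast]
  field_simp
  ring

theorem lintegral_Ioi_sq_div_pow_three_le {F : ℝ → ℝ≥0∞} {a c : ℝ} {A B : ℝ≥0∞}
    (ha : 0 < a) (hac : a ≤ c) (h0 : ∀ t ≤ a, F t = 0) (hA : ∀ t ∈ Ioc a c, F t ≤ A)
    (hB : ∀ t, c < t → F t ≤ B) :
    ∫⁻ t in Ioi 0, F t ^ 2 / ENNReal.ofReal (t ^ 3) ≤
      A ^ 2 * ENNReal.ofReal ((c - a) / a ^ 3) + B ^ 2 * ENNReal.ofReal (2 * c ^ 2)⁻¹ := by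
  have hF : ∀ t ∈ Ioi (0 : ℝ), F t ^ 2 / ENNReal.ofReal (t ^ 3) ≤
      (Ioc a c).indicator (fun _ => A ^ 2 / ENNReal.ofReal (a ^ 3)) t +
        (Ioi c).indicator (fun t => B ^ 2 * (ENNReal.ofReal (t ^ 3))⁻¹) t := by
    intro t ht
    rcases le_or_gt t a with hta | hat
    · simp [h0 t hta]
    rcases le_or_gt t c with htc | hct
    · rw [indicator_of_mem (show t ∈ Ioc a c from ⟨hat, htc⟩)]
      refine le_add_right (ENNReal.div_le_div (pow_le_pow_left' (hA t ⟨hat, htc⟩) 2) ?_)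
      exact ENNReal.ofReal_le_ofReal (pow_le_pow_left₀ ha.le hat.le 3)
    · rw [indicator_of_mem (show t ∈ Ioi c from hct), div_eq_mul_inv]
      exact le_add_left (mul_le_mul_left (pow_le_pow_left' (hB t hct) 2) _)
  calc ∫⁻ t in Ioi 0, F t ^ 2 / ENNReal.ofReal (t ^ 3)
      ≤ ∫⁻ t, (Ioc a c).indicator (fun _ => A ^ 2 / ENNReal.ofReal (a ^ 3)) t +
          (Ioi c).indicator (fun t => B ^ 2 * (ENNReal.ofReal (t ^ 3))⁻¹) t :=
        (setLIntegral_mono' measurableSet_Ioi hF).trans (setLIntegral_le_lintegral _ _)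
    _ = A ^ 2 / ENNReal.ofReal (a ^ 3) * ENNReal.ofReal (c - a) +
          B ^ 2 * ENNReal.ofReal (2 * c ^ 2)⁻¹ := by
        rw [lintegral_add_left (measurable_const.indicator measurableSet_Ioc),
          lintegral_indicator measurableSet_Ioc, lintegral_indicator measurableSet_Ioi,
          setLIntegral_const, Real.volume_Ioc,
          lintegral_const_mul (f := fun t : ℝ => (ENNReal.ofReal (t ^ 3))⁻¹) _ (by fun_prop),
          lintegral_Ioi_inv_pow_three (ha.trans_le hac)]
    _ = A ^ 2 * ENNReal.ofReal ((c - a) / a ^ 3) + B ^ 2 * ENNReal.ofReal (2 * c ^ 2)⁻¹ := by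
        rw [div_eq_mul_inv, div_eq_mul_inv, mul_assoc,
          ← ENNReal.ofReal_inv_of_pos (by positivity), ← ENNReal.ofReal_mul (by positivity),
          mul_comm (a ^ 3)⁻¹]

theorem sq_mul_ofReal_rpow_half (A : ℝ≥0∞) {u : ℝ} (hu : 0 ≤ u) :
    (A ^ 2 * ENNReal.ofReal u) ^ (1 / 2 : ℝ) = A * ENNReal.ofReal √u := by
  rw [ENNReal.mul_rpow_of_nonneg _ _ (by norm_num), ENNReal.ofReal_rpow_of_nonneg hu (by norm_num),
    ← Real.sqrt_eq_rpow, one_div]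
  congr 1
  simpa using ENNReal.pow_rpow_inv_natCast two_ne_zero A

theorem integral_sub_const_mul_eq_of_integral_eq_zero {α : Type*} [MeasurableSpace α]
    {μ : Measure α} {g b : α → ℝ} (hb : Integrable b μ) (hb0 : ∫ y, b y ∂μ = 0)
    (k : ℝ) :
    ∫ y, (g y - k) * b y ∂μ = ∫ y, g y * b y ∂μ := by
  by_cases hg : Integrable (fun y => g y * b y) μ
  · simp_rw [sub_mul]
    rw [integral_sub hg (hb.const_mul k), integral_const_mul, hb0, mul_zero, sub_zero]
  · have hgk : ¬ Integrable (fun y => (g y - k) * b y) μ := fun h =>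
      hg <| (h.add (hb.const_mul k)).congr <| ae_of_all _ fun y => by
        simp only [Pi.add_apply]; ring
    rw [integral_undef hg, integral_undef hgk]

section

variable {X : Type*} [MetricSpace X] [MeasurableSpace X]

theorem marcinkiewicz_le_of_truncation_bounds {μ : Measure X} {K : X → X → ℝ} {f : X → ℝ}
    {x : X} {a c : ℝ} {A B : ℝ≥0∞} (ha : 0 < a) (hac : a ≤ c)
    (h0 : ∀ t ≤ a, ∫ y in {y | dist x y < t}, K x y * f y ∂μ = 0)
    (hA : ∀ t ∈ Ioc a c, ‖∫ y in {y | dist x y < t}, K x y * f y ∂μ‖ₑ ≤ A)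
    (hB : ∀ t, c < t → ‖∫ y in {y | dist x y < t}, K x y * f y ∂μ‖ₑ ≤ B) :
    marcinkiewicz μ K f x ≤
      A * ENNReal.ofReal √((c - a) / a ^ 3) + B * ENNReal.ofReal √(2 * c ^ 2)⁻¹ := by
  unfold marcinkiewicz
  simp only [← Real.enorm_eq_ofReal_abs]
  calc _ ≤ (A ^ 2 * ENNReal.ofReal ((c - a) / a ^ 3) +
          B ^ 2 * ENNReal.ofReal (2 * c ^ 2)⁻¹) ^ (1 / 2 : ℝ) :=
        ENNReal.rpow_le_rpow (lintegral_Ioi_sq_div_pow_three_le ha hac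
          (fun t ht => by rw [h0 t ht, enorm_zero]) hA hB) (by norm_num)
    _ ≤ _ := ENNReal.rpow_add_le_add_rpow _ _ (by norm_num) (by norm_num)
    _ = _ := by
        rw [sq_mul_ofReal_rpow_half _ (div_nonneg (sub_nonneg.2 hac) (by positivity)),
          sq_mul_ofReal_rpow_half _ (by positivity)]

section Truncation

variable {μ : Measure X} {K : X → X → ℝ} {b : X → ℝ} {c x : X} {r t : ℝ}

theorem setIntegral_dist_lt_eq_zero (hbs : Function.support b ⊆ ball c r)
    (ht : t ≤ dist x c - r) : ∫ y in {y | dist x y < t}, K x y * b y ∂μ = 0 := by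
  refine setIntegral_eq_zero_of_forall_eq_zero fun y (hy : dist x y < t) => ?_
  have hby : b y = 0 := Function.notMem_support.1 fun h => by
    linarith [mem_ball.1 (hbs h), dist_triangle x y c]
  rw [hby, mul_zero]

theorem setIntegral_dist_lt_eq_integral_sub (hb : Integrable b μ) (hb0 : ∫ y, b y ∂μ = 0)
    (hbs : Function.support b ⊆ ball c r) (ht : dist x c + r < t) :
    ∫ y in {y | dist x y < t}, K x y * b y ∂μ = ∫ y, (K x y - K x c) * b y ∂μ := by
  rw [integral_sub_const_mul_eq_of_integral_eq_zero hb hb0]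
  refine setIntegral_eq_integral_of_forall_compl_eq_zero fun y (hy : ¬ dist x y < t) => ?_
  have hby : b y = 0 := Function.notMem_support.1 fun h => by
    linarith [mem_ball.1 (hbs h), dist_triangle_right x y c]
  rw [hby, mul_zero]

theorem marcinkiewicz_le_of_two_mul_le_dist (hb : Integrable b μ) (hb0 : ∫ y, b y ∂μ = 0)
    (hbs : Function.support b ⊆ ball c r) (hr : 0 < r) (hx : 2 * r ≤ dist x c) :
    marcinkiewicz μ K b x ≤
      ENNReal.ofReal (4 * √(r / dist x c) / dist x c) * ∫⁻ y, ‖K x y * b y‖ₑ ∂μ +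
        ∫⁻ y, ‖(K x y - K x c) * b y / dist x c‖ₑ ∂μ := by
  set d := dist x c
  have hd : 0 < d := by linarith
  refine (marcinkiewicz_le_of_truncation_bounds (a := d - r) (c := d + r)
    (A := ∫⁻ y, ‖K x y * b y‖ₑ ∂μ)
    (B := ∫⁻ y, ‖(K x y - K x c) * b y‖ₑ ∂μ)
    (by linarith) (by linarith) (fun t ht => setIntegral_dist_lt_eq_zero hbs ht)
    (fun t _ => (enorm_integral_le_lintegral_enorm _).trans (setLIntegral_le_lintegral _ _))
    (fun t ht => by
      rw [setIntegral_dist_lt_eq_integral_sub hb hb0 hbs ht]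
      exact enorm_integral_le_lintegral_enorm _)).trans (add_le_add ?_ ?_)
  · rw [mul_comm]
    gcongr
    refine Real.sqrt_le_iff.2 ⟨by positivity, ?_⟩
    rw [div_pow, mul_pow, Real.sq_sqrt (by positivity)]
    calc (d + r - (d - r)) / (d - r) ^ 3 ≤ 2 * r / (d / 2) ^ 3 := by
          rw [show d + r - (d - r) = 2 * r by ring]
          gcongr
          linarith
      _ = 4 ^ 2 * (r / d) / d ^ 2 := by field_simp; norm_num
  · simp_rw [div_eq_mul_inv _ d, enorm_mul _ d⁻¹]
    rw [lintegral_mul_const' _ _ enorm_ne_top, Real.enorm_of_nonneg (inv_nonneg.2 hd.le)]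
    gcongr
    refine Real.sqrt_le_iff.2 ⟨inv_nonneg.2 hd.le, ?_⟩
    rw [inv_pow]
    exact inv_anti₀ (by positivity) (by nlinarith)

end Truncation

section UpperDoubling

variable {μ : Measure X} {lam : X → ℝ → ℝ} {Clam : ℝ}

theorem IsUpperDoubling.sigmaFinite [Nonempty X] (h : IsUpperDoubling μ lam Clam) :
    SigmaFinite μ := by
  obtain ⟨x₀⟩ := ‹Nonempty X›
  exact ⟨⟨⟨fun n => ball x₀ (n + 1), fun _ => trivial,
    fun n => (h.measure_ball_le _ _ (by positivity)).trans_lt ENNReal.ofReal_lt_top,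
    iUnion_ball_nat_succ x₀⟩⟩⟩

theorem IsUpperDoubling.lam_two_pow_mul_le (h : IsUpperDoubling μ lam Clam) (x : X) {r : ℝ}
    (hr : 0 < r) (n : ℕ) : lam x (2 ^ n * r) ≤ Clam ^ n * lam x r := by
  induction n with
  | zero => simp
  | succ n ih =>
    have hClam : 0 ≤ Clam := zero_le_one.trans h.one_lt.le
    calc lam x (2 ^ (n + 1) * r) ≤ Clam * lam x (2 ^ (n + 1) * r / 2) :=
          h.lam_le _ _ (by positivity)
      _ = Clam * lam x (2 ^ n * r) := by congr 2; ring
      _ ≤ Clam * (Clam ^ n * lam x r) := by gcongr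
      _ = Clam ^ (n + 1) * lam x r := by ring

theorem IsUpperDoubling.sqrt_div_lam_le_of_mem_annulus (h : IsUpperDoubling μ lam Clam)
    {c x : X} {r : ℝ} (hr : 0 < r) {k : ℕ} (hxk : 4 ^ k * r ≤ dist x c)
    (hxR : dist x c < 4 ^ (k + 1) * r) :
    √(r / dist x c) / lam x (dist x c) ≤ Clam ^ 3 * 2⁻¹ ^ k / lam c (4 ^ (k + 1) * r) := by
  have hClam : 0 ≤ Clam := zero_le_one.trans h.one_lt.le
  have hd : 0 < dist x c := lt_of_lt_of_le (by positivity) hxk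
  have hsqrt : √(r / dist x c) ≤ 2⁻¹ ^ k := by
    refine Real.sqrt_le_iff.2 ⟨by positivity, ?_⟩
    calc r / dist x c ≤ r / (4 ^ k * r) := by gcongr
      _ = (2⁻¹ ^ k) ^ 2 := by
        rw [← pow_mul, pow_mul', show (2⁻¹ : ℝ) ^ 2 = 4⁻¹ by norm_num, inv_pow,
          mul_comm, ← div_div, div_self hr.ne', one_div]
  have hlam : lam c (4 ^ (k + 1) * r) ≤ Clam ^ 3 * lam x (dist x c) :=
    calc lam c (4 ^ (k + 1) * r) ≤ Clam * lam x (4 ^ (k + 1) * r) :=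
          h.lam_comp c x _ (by positivity) (by rw [dist_comm]; exact hxR.le)
      _ ≤ Clam * (Clam ^ 2 * lam x (4 ^ k * r)) := by
          rw [show (4 : ℝ) ^ (k + 1) * r = 2 ^ 2 * (4 ^ k * r) by ring]
          gcongr
          exact h.lam_two_pow_mul_le x (by positivity) 2
      _ ≤ Clam * (Clam ^ 2 * lam x (dist x c)) := by
          gcongr
          exact h.lam_mono x _ _ (by positivity) hxk
      _ = Clam ^ 3 * lam x (dist x c) := by ring
  have hlamR : 0 < lam c (4 ^ (k + 1) * r) := h.lam_pos _ _ (by positivity)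
  rw [div_le_div_iff₀ (h.lam_pos _ _ hd) hlamR]
  calc √(r / dist x c) * lam c (4 ^ (k + 1) * r)
      ≤ 2⁻¹ ^ k * (Clam ^ 3 * lam x (dist x c)) := by gcongr
    _ = Clam ^ 3 * 2⁻¹ ^ k * lam x (dist x c) := by ring

theorem IsUpperDoubling.lintegral_annulus_le [OpensMeasurableSpace X]
    (h : IsUpperDoubling μ lam Clam) (c : X) {r : ℝ} (hr : 0 < r) (k : ℕ) :
    ∫⁻ x in ball c (4 ^ (k + 1) * r) \ ball c (4 ^ k * r),
        ENNReal.ofReal (√(r / dist x c) / lam x (dist x c)) ∂μ ≤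
      ENNReal.ofReal (Clam ^ 3) * 2⁻¹ ^ k := by
  have hClam : 0 ≤ Clam := zero_le_one.trans h.one_lt.le
  set R : ℝ := 4 ^ (k + 1) * r
  have hR : 0 < R := by positivity
  have hlamR : 0 < lam c R := h.lam_pos _ _ hR
  calc ∫⁻ x in ball c R \ ball c (4 ^ k * r),
        ENNReal.ofReal (√(r / dist x c) / lam x (dist x c)) ∂μ
      ≤ ∫⁻ _ in ball c R \ ball c (4 ^ k * r),
          ENNReal.ofReal (Clam ^ 3 * 2⁻¹ ^ k / lam c R) ∂μ :=
        setLIntegral_mono' (measurableSet_ball.diff measurableSet_ball) fun x hx =>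
          ENNReal.ofReal_le_ofReal
            (h.sqrt_div_lam_le_of_mem_annulus hr (not_lt.1 hx.2) (mem_ball.1 hx.1))
    _ ≤ ENNReal.ofReal (Clam ^ 3 * 2⁻¹ ^ k / lam c R) * ENNReal.ofReal (lam c R) := by
        rw [setLIntegral_const]
        gcongr
        exact (measure_mono sdiff_subset).trans (h.measure_ball_le _ _ hR)
    _ = ENNReal.ofReal (Clam ^ 3) * 2⁻¹ ^ k := by
        rw [← ENNReal.ofReal_mul (by positivity), div_mul_cancel₀ _ hlamR.ne',
          ENNReal.ofReal_mul (by positivity),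
          ENNReal.ofReal_pow (by norm_num : (0 : ℝ) ≤ 2⁻¹),
          ENNReal.ofReal_inv_of_pos two_pos, ENNReal.ofReal_ofNat]

theorem IsUpperDoubling.lintegral_compl_ball_le [OpensMeasurableSpace X]
    (h : IsUpperDoubling μ lam Clam) (c : X) {r : ℝ} (hr : 0 < r) :
    ∫⁻ x in (ball c r)ᶜ, ENNReal.ofReal (√(r / dist x c) / lam x (dist x c)) ∂μ ≤
      ENNReal.ofReal (2 * Clam ^ 3) := by
  have hcover : (ball c r)ᶜ ⊆ ⋃ k : ℕ, ball c (4 ^ (k + 1) * r) \ ball c (4 ^ k * r) := by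
    intro x hx
    have hx : 1 ≤ dist x c / r := (one_le_div hr).2 (not_lt.1 hx)
    obtain ⟨k, hk, hk1⟩ := exists_nat_pow_near hx (by norm_num : (1 : ℝ) < 4)
    refine mem_iUnion.2 ⟨k, mem_ball.2 ((div_lt_iff₀ hr).1 hk1), fun hxk => ?_⟩
    exact (mem_ball.1 hxk).not_ge ((le_div_iff₀ hr).1 hk)
  calc _ ≤ ∑' k : ℕ, ∫⁻ x in ball c (4 ^ (k + 1) * r) \ ball c (4 ^ k * r),
          ENNReal.ofReal (√(r / dist x c) / lam x (dist x c)) ∂μ :=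
        (lintegral_mono_set hcover).trans (lintegral_iUnion_le _ _)
    _ ≤ ∑' k : ℕ, ENNReal.ofReal (Clam ^ 3) * 2⁻¹ ^ k :=
        ENNReal.tsum_le_tsum (h.lintegral_annulus_le c hr)
    _ = ENNReal.ofReal (2 * Clam ^ 3) := by
        rw [ENNReal.tsum_mul_left, ENNReal.tsum_geometric_two, mul_comm,
          ENNReal.ofReal_mul zero_le_two, ENNReal.ofReal_ofNat]

end UpperDoubling

section Kernel

variable {μ : Measure X} {lam : X → ℝ → ℝ} {Clam : ℝ} {K : X → X → ℝ} {CK : ℝ}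
  {b : X → ℝ} {c x : X} {r : ℝ}

theorem KernelSize.abs_le (hsize : KernelSize lam K CK) (h : IsUpperDoubling μ lam Clam)
    (hCK : 0 ≤ CK) {y : X} {d : ℝ} (hd : 0 < d) (h1 : d / 2 ≤ dist x y)
    (h2 : dist x y ≤ 2 * d) : |K x y| ≤ 2 * CK * Clam * d / lam x d := by
  have hlam : 0 < lam x (d / 2) := h.lam_pos x _ (by positivity)
  calc |K x y| ≤ CK * dist x y / lam x (dist x y) := hsize x y (dist_pos.1 (by linarith))
    _ ≤ CK * (2 * d) / lam x (d / 2) := by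
        gcongr
        exact h.lam_mono x _ _ (by positivity) h1
    _ ≤ 2 * CK * Clam * d / lam x d := by
        rw [div_le_div_iff₀ hlam (h.lam_pos x d hd)]
        calc CK * (2 * d) * lam x d ≤ CK * (2 * d) * (Clam * lam x (d / 2)) := by
              gcongr
              exact h.lam_le x d hd
          _ = 2 * CK * Clam * d * lam x (d / 2) := by ring

theorem KernelSize.lintegral_enorm_mul_le (hsize : KernelSize lam K CK)
    (h : IsUpperDoubling μ lam Clam) (hCK : 0 ≤ CK) (hbs : Function.support b ⊆ ball c r)
    (hx : 2 * r ≤ dist x c) :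
    ∫⁻ y, ‖K x y * b y‖ₑ ∂μ ≤
      ENNReal.ofReal (2 * CK * Clam * dist x c / lam x (dist x c)) *
        ∫⁻ y, ‖b y‖ₑ ∂μ := by
  rw [← lintegral_const_mul' _ _ ENNReal.ofReal_ne_top]
  refine lintegral_mono fun y => ?_
  rw [enorm_mul]
  by_cases hby : b y = 0
  · simp [hby]
  have hy : dist y c < r := mem_ball.1 (hbs hby)
  gcongr
  rw [Real.enorm_eq_ofReal_abs]
  have hyc : 0 ≤ dist y c := dist_nonneg
  refine ENNReal.ofReal_le_ofReal (hsize.abs_le h hCK (by linarith) ?_ ?_)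
  · linarith [dist_triangle x y c]
  · linarith [dist_triangle_right x y c]

theorem KernelSize.marcinkiewicz_le (hsize : KernelSize lam K CK)
    (h : IsUpperDoubling μ lam Clam) (hCK : 0 ≤ CK) (hb : Integrable b μ)
    (hb0 : ∫ y, b y ∂μ = 0) (hbs : Function.support b ⊆ ball c r) (hr : 0 < r)
    (hx : 2 * r ≤ dist x c) :
    marcinkiewicz μ K b x ≤
      ENNReal.ofReal (8 * CK * Clam) * (∫⁻ y, ‖b y‖ₑ ∂μ) *
          ENNReal.ofReal (√(r / dist x c) / lam x (dist x c)) +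
        ∫⁻ y, ‖(K x y - K x c) * b y / dist x c‖ₑ ∂μ := by
  have hd : 0 < dist x c := by linarith
  have hlam : 0 < lam x (dist x c) := h.lam_pos x _ hd
  have hClam : 0 ≤ Clam := zero_le_one.trans h.one_lt.le
  refine (marcinkiewicz_le_of_two_mul_le_dist hb hb0 hbs hr hx).trans (add_le_add_left ?_ _)
  calc ENNReal.ofReal (4 * √(r / dist x c) / dist x c) * ∫⁻ y, ‖K x y * b y‖ₑ ∂μ
      ≤ ENNReal.ofReal (4 * √(r / dist x c) / dist x c) *
          (ENNReal.ofReal (2 * CK * Clam * dist x c / lam x (dist x c)) *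
            ∫⁻ y, ‖b y‖ₑ ∂μ) := by
        gcongr
        exact hsize.lintegral_enorm_mul_le h hCK hbs hx
    _ = _ := by
        have hprod : 4 * √(r / dist x c) / dist x c *
            (2 * CK * Clam * dist x c / lam x (dist x c)) =
            8 * CK * Clam * (√(r / dist x c) / lam x (dist x c)) := by
          field_simp
          ring
        rw [← mul_assoc, ← ENNReal.ofReal_mul (by positivity), hprod,
          ENNReal.ofReal_mul (by positivity)]
        ring

theorem aemeasurable_kernel_sub_mul_div [OpensMeasurableSpace X]
    (hK : Measurable (Function.uncurry K)) (hb : AEMeasurable b μ) (c : X) (ν : Measure X) :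
    AEMeasurable (fun p : X × X => ‖(K p.1 p.2 - K p.1 c) * b p.2 / dist p.1 c‖ₑ)
      (ν.prod μ) :=
  (((hK.sub (hK.comp (measurable_fst.prodMk measurable_const))).aemeasurable.mul
    hb.comp_snd).div
    ((continuous_id.dist continuous_const).measurable.comp measurable_fst).aemeasurable).enorm

theorem KernelReg.lintegral_compl_ball_le [OpensMeasurableSpace X] [SFinite μ]
    (hreg : KernelReg μ K CK) (hK : Measurable (Function.uncurry K)) (hb : AEMeasurable b μ)
    (hbs : Function.support b ⊆ ball c r) :
    ∫⁻ x in (ball c (2 * r))ᶜ,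
        ∫⁻ y, ‖(K x y - K x c) * b y / dist x c‖ₑ ∂μ ∂μ ≤
      ENNReal.ofReal CK * ∫⁻ y, ‖b y‖ₑ ∂μ := by
  rw [lintegral_lintegral_swap (aemeasurable_kernel_sub_mul_div hK hb c _),
    ← lintegral_const_mul' _ _ ENNReal.ofReal_ne_top]
  refine lintegral_mono fun y => ?_
  by_cases hby : b y = 0
  · simp [hby]
  have hy : dist c y < r := by rw [dist_comm]; exact mem_ball.1 (hbs hby)
  have hsub : (ball c (2 * r))ᶜ ⊆ {x | 2 * dist c y ≤ dist x c} := fun x hx => by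
    have : 2 * r ≤ dist x c := not_lt.1 hx
    show 2 * dist c y ≤ dist x c
    linarith
  have hpt : ∀ x, ‖(K x y - K x c) * b y / dist x c‖ₑ =
      ‖b y‖ₑ * ENNReal.ofReal (|K x c - K x y| / dist x c) := fun x => by
    rw [Real.enorm_eq_ofReal_abs, Real.enorm_eq_ofReal_abs, ← ENNReal.ofReal_mul (abs_nonneg _),
      abs_div, abs_mul, abs_of_nonneg dist_nonneg, abs_sub_comm]
    congr 1
    ring
  simp_rw [hpt]
  rw [lintegral_const_mul' _ _ enorm_ne_top, mul_comm]
  gcongr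
  refine (lintegral_mono_set hsub).trans (le_trans (lintegral_mono fun x => ?_) (hreg c y))
  exact ENNReal.ofReal_le_ofReal
    (div_le_div_of_nonneg_right (le_add_of_nonneg_right (abs_nonneg _)) dist_nonneg)

theorem lintegral_compl_ball_marcinkiewicz_le [BorelSpace X] (h : IsUpperDoubling μ lam Clam)
    (hCK : 0 ≤ CK) (hK : Measurable (Function.uncurry K)) (hsize : KernelSize lam K CK)
    (hreg : KernelReg μ K CK) (hb : Integrable b μ) (hb0 : ∫ y, b y ∂μ = 0)
    (hbs : Function.support b ⊆ ball c r) (hr : 0 < r) :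
    ∫⁻ x in (ball c (2 * r))ᶜ, marcinkiewicz μ K b x ∂μ ≤
      ENNReal.ofReal (16 * CK * Clam ^ 4 + CK) * ∫⁻ y, ‖b y‖ₑ ∂μ := by
  have : Nonempty X := ⟨c⟩
  have := h.sigmaFinite
  set L := ∫⁻ y, ‖b y‖ₑ ∂μ
  have hClam : 0 ≤ Clam := zero_le_one.trans h.one_lt.le
  calc ∫⁻ x in (ball c (2 * r))ᶜ, marcinkiewicz μ K b x ∂μ
      ≤ ∫⁻ x in (ball c (2 * r))ᶜ, (ENNReal.ofReal (8 * CK * Clam) * L *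
            ENNReal.ofReal (√(r / dist x c) / lam x (dist x c)) +
          ∫⁻ y, ‖(K x y - K x c) * b y / dist x c‖ₑ ∂μ) ∂μ :=
        setLIntegral_mono' measurableSet_ball.compl fun x hx =>
          hsize.marcinkiewicz_le h hCK hb hb0 hbs hr (not_lt.1 hx)
    _ = ENNReal.ofReal (8 * CK * Clam) * L * ∫⁻ x in (ball c (2 * r))ᶜ,
            ENNReal.ofReal (√(r / dist x c) / lam x (dist x c)) ∂μ +
          ∫⁻ x in (ball c (2 * r))ᶜ,
            ∫⁻ y, ‖(K x y - K x c) * b y / dist x c‖ₑ ∂μ ∂μ := by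
        rw [lintegral_add_right' _ (aemeasurable_kernel_sub_mul_div hK hb.aemeasurable c
          _).lintegral_prod_right', lintegral_const_mul' _ _
          (ENNReal.mul_ne_top ENNReal.ofReal_ne_top hb.hasFiniteIntegral.ne)]
    _ ≤ ENNReal.ofReal (8 * CK * Clam) * L * ENNReal.ofReal (2 * Clam ^ 3) +
          ENNReal.ofReal CK * L := by
        gcongr
        · exact (lintegral_mono_set (compl_subset_compl.2 (ball_subset_ball (by linarith)))).trans
            (h.lintegral_compl_ball_le c hr)
        · exact hreg.lintegral_compl_ball_le hK hb.aemeasurable hbs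
    _ = ENNReal.ofReal (16 * CK * Clam ^ 4 + CK) * L := by
        rw [ENNReal.ofReal_add (by positivity) hCK, add_mul, mul_right_comm,
          ← ENNReal.ofReal_mul (by positivity)]
        congr 3
        ring

end Kernel

end

theorem marcinkiewicz_integral_outside_double_general
    {X : Type*} [MetricSpace X] [MeasurableSpace X] [BorelSpace X]
    (μ : Measure X) (lam : X → ℝ → ℝ) (Clam : ℝ)
    (K : X → X → ℝ) (CK : ℝ) (hCK : 0 < CK)
    (hUD : IsUpperDoubling μ lam Clam)
    (hK : Measurable (Function.uncurry K))
    (hsize : KernelSize lam K CK) (hreg : KernelReg μ K CK) :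
    ∃ C : ℝ, 0 < C ∧ ∀ (cS : X) (rS : ℝ), 0 < rS →
      ∀ b : X → ℝ, Integrable b μ → Function.support b ⊆ ball cS rS →
        (∫ x, b x ∂μ) = 0 →
        ∫⁻ x in (ball cS (2 * rS))ᶜ, marcinkiewicz μ K b x ∂μ ≤
          ENNReal.ofReal C * ∫⁻ x, ENNReal.ofReal |b x| ∂μ := by
  refine ⟨16 * CK * Clam ^ 4 + CK, by positivity, fun cS rS hr b hb hbs hb0 => ?_⟩
  simpa only [← Real.enorm_eq_ofReal_abs] using
    lintegral_compl_ball_marcinkiewicz_le hUD hCK.le hK hsize hreg hb hb0 hbs hr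

/-- The standard estimate for the Marcinkiewicz integral of a function with vanishing
mean: if `b ∈ L¹(μ)` is supported in a ball `S` and `∫ b dμ = 0`, then
`∫_{X∖2S} M(b) dμ ≤ C ‖b‖_{L¹(μ)}`. -/
theorem marcinkiewicz_integral_outside_double
    {X : Type*} [MetricSpace X] [MeasurableSpace X] [BorelSpace X]
    (μ : Measure X) (lam : X → ℝ → ℝ) (Clam : ℝ) (N0 : ℕ)
    (K : X → X → ℝ) (CK : ℝ) (hCK : 0 < CK)
    (hUD : IsUpperDoubling μ lam Clam) (hGD : GeometricallyDoubling X N0)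
    (hK : Measurable (Function.uncurry K))
    (hsize : KernelSize lam K CK) (hreg : KernelReg μ K CK) :
    ∃ C : ℝ, 0 < C ∧ ∀ (cS : X) (rS : ℝ), 0 < rS →
      ∀ b : X → ℝ, Integrable b μ → Function.support b ⊆ ball cS rS →
        (∫ x, b x ∂μ) = 0 →
        ∫⁻ x in (ball cS (2 * rS))ᶜ, marcinkiewicz μ K b x ∂μ ≤
          ENNReal.ofReal C * ∫⁻ x, ENNReal.ofReal |b x| ∂μ :=
  marcinkiewicz_integral_outside_double_general μ lam Clam K CK hCK hUD hK hsize hreg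

end NonHomog
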